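/- For q ≥ 1 and t ≥ 0, the confluent hypergeometric function satisfies 1 + t/q − (1/(6q))(1 − 1/q)t² ≤ M(−1/q, 1/2, −t/2) ≤ 1 + t/q, where M(c, d, x) = Σ_{n≥0} (c)_n x^n/((d)_n n!). -/

import Mathlib

/-!
Kummer's transformation `M(a, b, -s) = e^{-s} M(b - a, b, s)` turns the alternating series into
`e^{-s} ∑ₙ ρₙ sⁿ / n!` with the positive ratios `ρₙ = (b + u)ₙ / (b)ₙ` (here `a = -u`, `b = 1/2`,
`s = t/2`). By induction on `n`, `ρₙ` lies between the polynomials `1 + (u/b) n` and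
`1 + (u/b) n - u(1-u)/(2b(b+1)) n(n-1)`, and weighting these with `sⁿ / n!` gives exactly
`(1 + (u/b) s) eˢ` and `(1 + (u/b) s - u(1-u)/(2b(b+1)) s²) eˢ`. The coefficient identity behind
Kummer's transformation is the Chu–Vandermonde identity.
-/

open Finset Polynomial Filter
open scoped Nat

theorem descPochhammer_smeval_int_eq_eval {R : Type*} [Ring R] (r : R) (n : ℕ) :
    (descPochhammer ℤ n).smeval r = (descPochhammer R n).eval r := by
  rw [descPochhammer_smeval_eq_ascPochhammer, ascPochhammer_smeval_eq_eval,
    descPochhammer_eval_eq_ascPochhammer]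

/-- The Chu–Vandermonde identity for falling factorials at `-a` and `b + n - 1`, rewritten with
rising factorials. -/
theorem ascPochhammer_eval_sub_eq_sum {R : Type*} [CommRing R] (n : ℕ) (a b : R) :
    (ascPochhammer R n).eval (b - a) = ∑ k ∈ range (n + 1),
      (-1) ^ k * n.choose k * (ascPochhammer R k).eval a *
        (ascPochhammer R (n - k)).eval (b + k) := by
  have h := Ring.descPochhammer_smeval_add (r := -a) (s := b + n - 1) n (Commute.all _ _)
  rw [Nat.sum_antidiagonal_eq_sum_range_succ (fun i j => (n.choose i : R) *
    ((descPochhammer ℤ i).smeval (-a) * (descPochhammer ℤ j).smeval (b + n - 1)))] at h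
  simp only [descPochhammer_smeval_int_eq_eval, descPochhammer_eval_eq_ascPochhammer] at h
  convert h using 1
  · congr 1; ring
  · refine sum_congr rfl fun k hk => ?_
    have hkn : k ≤ n := Nat.lt_succ_iff.mp (mem_range.mp hk)
    rw [← neg_neg a, ascPochhammer_eval_neg_eq_descPochhammer,
      descPochhammer_eval_eq_ascPochhammer, neg_neg, Nat.cast_sub hkn,
      show b + n - 1 - (n - k) + 1 = b + k by ring]
    have hsign : ((-1 : R) ^ k) * (-1) ^ k = 1 := by rw [← mul_pow]; norm_num
    linear_combination (n.choose k * (ascPochhammer R k).eval (-a - k + 1) *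
      (ascPochhammer R (n - k)).eval (b + k)) * hsign

theorem ascPochhammer_add_eval {S : Type*} [CommSemiring S] (k m : ℕ) (b : S) :
    (ascPochhammer S (k + m)).eval b =
      (ascPochhammer S k).eval b * (ascPochhammer S m).eval (b + k) := by
  rw [← ascPochhammer_mul, eval_mul, eval_comp, eval_add, eval_X, eval_natCast]

theorem ascPochhammer_eval_div_succ {K : Type*} [Field K] (b c : K) (n : ℕ) :
    (ascPochhammer K (n + 1)).eval c / (ascPochhammer K (n + 1)).eval b =
      (ascPochhammer K n).eval c / (ascPochhammer K n).eval b * ((c + n) / (b + n)) := by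
  simp only [ascPochhammer_succ_eval, mul_div_mul_comm]

theorem ascPochhammer_eval_add_div_le {u b : ℝ} (hu0 : 0 ≤ u) (hu1 : u ≤ 1) (hb : 0 < b)
    (n : ℕ) :
    (ascPochhammer ℝ n).eval (b + u) / (ascPochhammer ℝ n).eval b ≤ 1 + u / b * n := by
  induction n with
  | zero => simp
  | succ n ih =>
    have hbn : 0 < b + n := by positivity
    have hstep : (1 + u / b * n) * (b + u + n) ≤ (1 + u / b * (n + 1)) * (b + n) := by
      have key : (1 + u / b * (n + 1)) * (b + n) - (1 + u / b * n) * (b + u + n) =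
          u * (1 - u) / b * n := by field_simp; ring
      have : 0 ≤ u * (1 - u) / b * n := by
        have := sub_nonneg.2 hu1
        positivity
      linarith
    rw [ascPochhammer_eval_div_succ, Nat.cast_succ]
    calc _ ≤ (1 + u / b * n) * ((b + u + n) / (b + n)) :=
          mul_le_mul_of_nonneg_right ih (by positivity)
      _ ≤ 1 + u / b * (n + 1) := by
          rw [← mul_div_assoc, div_le_iff₀ hbn]
          exact hstep

theorem le_ascPochhammer_eval_add_div {u b : ℝ} (hu0 : 0 ≤ u) (hu1 : u ≤ 1) (hb : 0 < b)
    (n : ℕ) :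
    1 + u / b * n - u * (1 - u) / (2 * b * (b + 1)) * (n * (n - 1)) ≤
      (ascPochhammer ℝ n).eval (b + u) / (ascPochhammer ℝ n).eval b := by
  induction n with
  | zero => simp
  | succ n ih =>
    have hbn : 0 < b + n := by positivity
    set L : ℝ → ℝ := fun m => 1 + u / b * m - u * (1 - u) / (2 * b * (b + 1)) * (m * (m - 1))
    have hstep : L (n + 1) * (b + n) ≤ L n * (b + u + n) := by
      have key : L n * (b + u + n) - L (n + 1) * (b + n) =
          u * (1 - u) * (2 - u) / (2 * b * (b + 1)) * (n * (n - 1)) := by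
        simp only [L]; field_simp; ring
      have hn : (0 : ℝ) ≤ n * (n - 1) := by
        rcases n with _ | n
        · simp
        · push_cast; nlinarith
      have : 0 ≤ u * (1 - u) * (2 - u) / (2 * b * (b + 1)) * (n * (n - 1)) := by
        have := sub_nonneg.2 hu1
        have : (0 : ℝ) ≤ 2 - u := by linarith
        positivity
      linarith
    rw [ascPochhammer_eval_div_succ, Nat.cast_succ]
    calc L (n + 1) ≤ L n * ((b + u + n) / (b + n)) := by
          rw [← mul_div_assoc, le_div_iff₀ hbn]
          exact hstep
      _ ≤ _ := mul_le_mul_of_nonneg_right ih (by positivity)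

theorem hasSum_pow_div_factorial_exp (x : ℝ) :
    HasSum (fun n => x ^ n / n !) (Real.exp x) := by
  rw [Real.exp_eq_exp_ℝ]
  exact NormedSpace.expSeries_div_hasSum_exp x

theorem hasSum_descFactorial_mul_pow_div_factorial (m : ℕ) (x : ℝ) :
    HasSum (fun n => (n.descFactorial m : ℝ) * (x ^ n / n !)) (x ^ m * Real.exp x) := by
  rw [← hasSum_nat_add_iff' m]
  have hlow : ∑ i ∈ range m, (i.descFactorial m : ℝ) * (x ^ i / i !) = 0 :=
    sum_eq_zero fun i hi => by
      rw [Nat.descFactorial_eq_zero_iff_lt.mpr (mem_range.mp hi), Nat.cast_zero, zero_mul]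
  rw [hlow, sub_zero]
  refine ((hasSum_pow_div_factorial_exp x).mul_left (x ^ m)).congr_fun fun n => ?_
  have hfact := Nat.factorial_mul_descFactorial (Nat.le_add_left m n)
  rw [Nat.add_sub_cancel] at hfact
  rw [← hfact, pow_add]
  have : (0 : ℝ) < (n + m).descFactorial m := by
    exact_mod_cast Nat.descFactorial_pos.mpr (Nat.le_add_left m n)
  push_cast
  field_simp

noncomputable def kummerTerm (a b x : ℝ) (n : ℕ) : ℝ :=
  (ascPochhammer ℝ n).eval a * x ^ n / ((ascPochhammer ℝ n).eval b * (n.factorial : ℝ))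

noncomputable def kummerM (a b x : ℝ) : ℝ := ∑' n, kummerTerm a b x n

theorem kummerTerm_succ (a b x : ℝ) (n : ℕ) :
    kummerTerm a b x (n + 1) = kummerTerm a b x n * ((a + n) * x / ((b + n) * (n + 1))) := by
  simp only [kummerTerm, ascPochhammer_succ_eval, pow_succ, Nat.factorial_succ, Nat.cast_mul,
    Nat.cast_succ, ← mul_div_mul_comm]
  congr 1 <;> ring

theorem summable_norm_kummerTerm (a x : ℝ) {b : ℝ} (hb : 0 < b) :
    Summable fun n => ‖kummerTerm a b x n‖ := by
  refine summable_of_ratio_norm_eventually_le (r := 1 / 2) (by norm_num) ?_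
  filter_upwards [eventually_ge_atTop ⌈2 * (|a| + 1) * |x|⌉₊] with n hn
  have hn : 2 * (|a| + 1) * |x| ≤ n := Nat.ceil_le.mp hn
  have hden : 0 < (b + n) * (n + 1) := by positivity
  have han : |a + n| ≤ (|a| + 1) * (n + 1) := by
    have := abs_add_le a n
    rw [Nat.abs_cast] at this
    nlinarith [abs_nonneg a, (Nat.cast_nonneg n : (0 : ℝ) ≤ n)]
  have hratio : ‖(a + n) * x / ((b + n) * (n + 1))‖ ≤ 1 / 2 := by
    rw [norm_div, norm_mul, Real.norm_of_nonneg hden.le, div_le_iff₀ hden, Real.norm_eq_abs,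
      Real.norm_eq_abs]
    nlinarith [abs_nonneg x, abs_nonneg (a + n), mul_le_mul_of_nonneg_right han (abs_nonneg x)]
  rw [norm_norm, norm_norm, kummerTerm_succ, norm_mul, mul_comm]
  exact mul_le_mul_of_nonneg_right hratio (norm_nonneg _)

theorem sum_range_kummerTerm_mul_pow_div_factorial (a x : ℝ) {b : ℝ} (hb : 0 < b) (n : ℕ) :
    ∑ k ∈ range (n + 1), kummerTerm a b (-x) k * (x ^ (n - k) / (n - k)!) =
      kummerTerm (b - a) b x n := by
  rw [kummerTerm, ascPochhammer_eval_sub_eq_sum, sum_mul, sum_div]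
  refine sum_congr rfl fun k hk => ?_
  obtain ⟨m, rfl⟩ := Nat.exists_eq_add_of_le (Nat.lt_succ_iff.mp (mem_range.mp hk))
  have hfact := Nat.add_choose_mul_factorial_mul_factorial k m
  rw [← Nat.choose_symm_add] at hfact
  rw [Nat.add_sub_cancel_left, ascPochhammer_add_eval, pow_add, neg_pow, kummerTerm, ← hfact]
  have : 0 < (ascPochhammer ℝ k).eval b := ascPochhammer_pos k b hb
  have : 0 < (ascPochhammer ℝ m).eval (b + k) := ascPochhammer_pos m _ (by positivity)
  have : 0 < ((k + m).choose k : ℝ) := by exact_mod_cast Nat.choose_pos (Nat.le_add_right k m)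
  push_cast
  field_simp
  ring

/-- Kummer's transformation, as the Cauchy product of `M(a, b, -x)` with the series of `eˣ`. -/
theorem hasSum_kummerTerm_sub (a x : ℝ) {b : ℝ} (hb : 0 < b) :
    HasSum (kummerTerm (b - a) b x) (kummerM a b (-x) * Real.exp x) := by
  have hexp_norm : Summable fun n => ‖x ^ n / (n ! : ℝ)‖ := by
    simpa [norm_div, norm_pow] using Real.summable_pow_div_factorial |x|
  rw [← (hasSum_pow_div_factorial_exp x).tsum_eq]
  exact (hasSum_sum_range_mul_of_summable_norm (summable_norm_kummerTerm a (-x) hb)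
    hexp_norm).congr_fun fun n => (sum_range_kummerTerm_mul_pow_div_factorial a x hb n).symm

theorem hasSum_ascPochhammer_div_mul_pow_div_factorial (u s : ℝ) {b : ℝ} (hb : 0 < b) :
    HasSum (fun n => (ascPochhammer ℝ n).eval (b + u) / (ascPochhammer ℝ n).eval b *
      (s ^ n / n !)) (kummerM (-u) b (-s) * Real.exp s) := by
  refine (sub_neg_eq_add b u ▸ hasSum_kummerTerm_sub (-u) s hb).congr_fun fun n => ?_
  rw [kummerTerm, mul_div_mul_comm]

theorem kummerM_neg_le {u b s : ℝ} (hu0 : 0 ≤ u) (hu1 : u ≤ 1) (hb : 0 < b) (hs : 0 ≤ s) :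
    kummerM (-u) b (-s) ≤ 1 + u / b * s := by
  have hbound : HasSum (fun n : ℕ => (1 + u / b * n) * (s ^ n / n !))
      ((1 + u / b * s) * Real.exp s) := by
    have h := (hasSum_descFactorial_mul_pow_div_factorial 0 s).add
      ((hasSum_descFactorial_mul_pow_div_factorial 1 s).mul_left (u / b))
    simp only [Nat.descFactorial_zero, Nat.descFactorial_one, Nat.cast_one, pow_zero,
      pow_one] at h
    rw [show (1 + u / b * s) * Real.exp s = 1 * Real.exp s + u / b * (s * Real.exp s) by ring]
    exact h.congr_fun fun n => by ring
  refine le_of_mul_le_mul_right ?_ (Real.exp_pos s)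
  refine hasSum_le (fun n => ?_) (hasSum_ascPochhammer_div_mul_pow_div_factorial u s hb) hbound
  gcongr
  exact ascPochhammer_eval_add_div_le hu0 hu1 hb n

theorem le_kummerM_neg {u b s : ℝ} (hu0 : 0 ≤ u) (hu1 : u ≤ 1) (hb : 0 < b) (hs : 0 ≤ s) :
    1 + u / b * s - u * (1 - u) / (2 * b * (b + 1)) * s ^ 2 ≤ kummerM (-u) b (-s) := by
  set c := u * (1 - u) / (2 * b * (b + 1))
  have hbound : HasSum (fun n : ℕ => (1 + u / b * n - c * (n * (n - 1))) * (s ^ n / n !))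
      ((1 + u / b * s - c * s ^ 2) * Real.exp s) := by
    have h := ((hasSum_descFactorial_mul_pow_div_factorial 0 s).add
      ((hasSum_descFactorial_mul_pow_div_factorial 1 s).mul_left (u / b))).sub
      ((hasSum_descFactorial_mul_pow_div_factorial 2 s).mul_left c)
    simp only [Nat.descFactorial_zero, Nat.descFactorial_one, Nat.cast_descFactorial_two,
      Nat.cast_one, pow_zero, pow_one] at h
    rw [show (1 + u / b * s - c * s ^ 2) * Real.exp s =
      1 * Real.exp s + u / b * (s * Real.exp s) - c * (s ^ 2 * Real.exp s) by ring]
    exact h.congr_fun fun n => by ring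
  refine le_of_mul_le_mul_right ?_ (Real.exp_pos s)
  refine hasSum_le (fun n => ?_) hbound (hasSum_ascPochhammer_div_mul_pow_div_factorial u s hb)
  gcongr
  exact le_ascPochhammer_eval_add_div hu0 hu1 hb n

/-- Bounds on the confluent hypergeometric function: for `q ≥ 1` and `t ≥ 0`,
`1 + t/q − (1/(6q))(1 − 1/q)t² ≤ M(−1/q, 1/2, −t/2) ≤ 1 + t/q`, where
`M(c, d, x) = Σ_{n≥0} (c)_n x^n/((d)_n n!)`. -/
theorem chf_bounds (q t : ℝ) (hq : 1 ≤ q) (ht : 0 ≤ t) :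
    1 + t / q - (1 / (6 * q)) * (1 - 1 / q) * t ^ 2
      ≤ (∑' n : ℕ, (ascPochhammer ℝ n).eval (-1 / q) * (-t / 2) ^ n
          / ((ascPochhammer ℝ n).eval (1 / 2) * (n.factorial : ℝ)))
    ∧ (∑' n : ℕ, (ascPochhammer ℝ n).eval (-1 / q) * (-t / 2) ^ n
          / ((ascPochhammer ℝ n).eval (1 / 2) * (n.factorial : ℝ)))
      ≤ 1 + t / q := by
  have hq0 : 0 < q := by linarith
  have hu0 : 0 ≤ 1 / q := by positivity
  have hu1 : 1 / q ≤ 1 := (div_le_one hq0).2 hq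
  have hs : 0 ≤ t / 2 := by positivity
  change _ ≤ kummerM (-1 / q) (1 / 2) (-t / 2) ∧ kummerM (-1 / q) (1 / 2) (-t / 2) ≤ _
  rw [neg_div, neg_div]
  constructor
  · convert le_kummerM_neg hu0 hu1 one_half_pos hs using 1
    field_simp
    ring
  · convert kummerM_neg_le hu0 hu1 one_half_pos hs using 1
    field_simp
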